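/- If G is a connected graph and H is a subdivision of G, then rx_3(H) ≤ rx_3(G) + |V(H)| − |V(G)|. -/

import Mathlib

open SimpleGraph

universe u

/-- `T` is a rainbow `S`-tree: a tree (as a subgraph of `G`) containing all vertices of `S`
whose edges receive pairwise distinct colors under `c`. -/
def SimpleGraph.IsRainbowSTree {V : Type u} {α : Type*} (G : SimpleGraph V)
    (c : Sym2 V → α) (S : Set V) (T : G.Subgraph) : Prop :=
  T.coe.IsTree ∧ S ⊆ T.verts ∧ Set.InjOn c T.edgeSet

/-- `c` is a `k`-rainbow coloring of `G`: every `k`-subset of vertices has a rainbow tree. -/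
def SimpleGraph.IsRainbowColoring {V : Type u} {α : Type*} [DecidableEq V]
    (G : SimpleGraph V) (k : ℕ) (c : Sym2 V → α) : Prop :=
  ∀ S : Finset V, S.card = k → ∃ T : G.Subgraph, G.IsRainbowSTree c ↑S T

/-- The `k`-rainbow index: minimum number of colors in a `k`-rainbow coloring. -/
noncomputable def SimpleGraph.rxk {V : Type u} [DecidableEq V]
    (G : SimpleGraph V) (k : ℕ) : ℕ :=
  sInf {q | ∃ c : Sym2 V → Fin q, G.IsRainbowColoring k c}

/-- Steiner distance of a vertex set `S` : minimum size of a tree of `G` connecting `S`. -/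
noncomputable def SimpleGraph.steinerDist {V : Type u} (G : SimpleGraph V) (S : Set V) : ℕ :=
  sInf {m | ∃ T : G.Subgraph, T.coe.IsTree ∧ S ⊆ T.verts ∧ T.edgeSet.ncard = m}

/-- The `k`-Steiner diameter: maximum Steiner distance over all `k`-subsets. -/
noncomputable def SimpleGraph.sdiam {V : Type u} [DecidableEq V]
    (G : SimpleGraph V) (k : ℕ) : ℕ :=
  sSup {d | ∃ S : Finset V, S.card = k ∧ G.steinerDist ↑S = d}

/-- A graph together with its vertex type. -/
def GraphSig : Type (u + 1) := Σ V : Type u, SimpleGraph V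

/-- `SubdivisionStep G H` : `H` is obtained from `G` by subdividing one edge `uv`,
i.e. deleting `uv`, adding a new vertex (corresponding to `none` under an equivalence
`W ≃ Option V`) and joining it to `u` and `v`. -/
def SubdivisionStep (G H : GraphSig.{u}) : Prop :=
  ∃ (u v : G.1), G.2.Adj u v ∧ ∃ f : H.1 ≃ Option G.1,
    (∀ a b : G.1, H.2.Adj (f.symm (some a)) (f.symm (some b)) ↔
        (G.2.Adj a b ∧ s(a, b) ≠ s(u, v))) ∧
    (∀ a : G.1, H.2.Adj (f.symm none) (f.symm (some a)) ↔ (a = u ∨ a = v))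

/-- `H` is a subdivision of `G` : obtained by a (possibly empty) sequence of
edge subdivisions. -/
def IsSubdivision {V W : Type u} (G : SimpleGraph V) (H : SimpleGraph W) : Prop :=
  Relation.ReflTransGen SubdivisionStep ⟨V, G⟩ ⟨W, H⟩

/-! Subdividing an edge `uv` by a new vertex `x` costs at most one extra color. Contracting `xu`
maps `H` onto `G`: give every edge of `H` the color of its image under a minimum 3-rainbow
coloring of `G`, and the collapsed edge `xu` a fresh color. For a 3-set `S` of vertices of `H`,
the preimage of a rainbow tree of `G` through the images of `S` is a connected rainbow subgraph of
`H` containing `S`, so it contains a rainbow `S`-tree. (If `G` has fewer than three vertices, `G`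
is a single edge and serves as that tree.) Induction over the subdivision steps gives the bound. -/

namespace SimpleGraph

section Connectivity

variable {α β : Type*}

theorem Connected.of_adj_reachable {G : SimpleGraph α} {H : SimpleGraph β} (hG : G.Connected)
    (σ : α → β) (hσ : ∀ a b, G.Adj a b → H.Reachable (σ a) (σ b))
    (hcover : ∀ y, ∃ a, H.Reachable y (σ a)) : H.Connected := by
  have : Nonempty β := hG.nonempty.map σ
  refine ⟨fun y₁ y₂ => ?_⟩
  obtain ⟨a₁, h₁⟩ := hcover y₁
  obtain ⟨a₂, h₂⟩ := hcover y₂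
  have h₁₂ : H.Reachable (σ a₁) (σ a₂) := by
    simp only [reachable_iff_reflTransGen] at hσ ⊢
    exact Relation.ReflTransGen.lift' σ hσ _ _
      ((reachable_iff_reflTransGen _ _).1 (hG.preconnected a₁ a₂))
  exact h₁.trans (h₁₂.trans h₂.symm)

theorem Subgraph.connected_top_iff {G : SimpleGraph α} :
    (⊤ : G.Subgraph).Connected ↔ G.Connected :=
  Subgraph.connected_iff'.trans Subgraph.topIso.connected_iff

theorem Subgraph.Connected.exists_isTree_le {G : SimpleGraph α} {A : G.Subgraph}
    (hA : A.Connected) : ∃ B ≤ A, B.verts = A.verts ∧ B.coe.IsTree := by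
  obtain ⟨T, hTA, hT⟩ := hA.coe.exists_isTree_le
  let B : G.Subgraph :=
    { verts := A.verts
      Adj a b := ∃ (ha : a ∈ A.verts) (hb : b ∈ A.verts), T.Adj ⟨a, ha⟩ ⟨b, hb⟩
      adj_sub := fun ⟨_, _, h⟩ => A.adj_sub (hTA h)
      edge_vert := fun ⟨ha, _, _⟩ => ha
      symm := ⟨fun _ _ ⟨ha, hb, h⟩ => ⟨hb, ha, h.symm⟩⟩ }
  have hBT : B.coe = T := by
    ext ⟨a, ha⟩ ⟨b, hb⟩
    exact ⟨fun ⟨_, _, h⟩ => h, fun h => ⟨ha, hb, h⟩⟩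
  exact ⟨B, ⟨le_rfl, fun _ _ ⟨_, _, h⟩ => hTA h⟩, rfl, hBT ▸ hT⟩

theorem edgeSet_subsingleton_of_card_le_two [Fintype α] {G : SimpleGraph α}
    (h : Fintype.card α ≤ 2) : G.edgeSet.Subsingleton := by
  classical
  have hcard : G.edgeFinset.card ≤ 1 :=
    card_edgeFinset_le_card_choose_two.trans (Nat.choose_le_choose 2 h)
  intro e he e' he'
  exact Finset.card_le_one.1 hcard e (by simpa using he) e' (by simpa using he')

end Connectivity

section Rainbow

variable {V : Type u} {α : Type*} {G : SimpleGraph V}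

theorem exists_isRainbowSTree_of_connected {c : Sym2 V → α} {S : Set V} {A : G.Subgraph}
    (hA : A.Connected) (hS : S ⊆ A.verts) (hc : Set.InjOn c A.edgeSet) :
    ∃ T : G.Subgraph, G.IsRainbowSTree c S T := by
  obtain ⟨T, hTA, hTv, hT⟩ := hA.exists_isTree_le
  exact ⟨T, hT, hTv ▸ hS, hc.mono (Subgraph.edgeSet_mono hTA)⟩

theorem isRainbowColoring_of_injective [DecidableEq V] {c : Sym2 V → α} (hG : G.Connected)
    (hc : Function.Injective c) (k : ℕ) : G.IsRainbowColoring k c := fun _ _ =>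
  exists_isRainbowSTree_of_connected (Subgraph.connected_top_iff.2 hG) (Set.subset_univ _) hc.injOn

theorem rxk_le_of_isRainbowColoring [DecidableEq V] {k q : ℕ} (c : Sym2 V → Fin q)
    (hc : G.IsRainbowColoring k c) : G.rxk k ≤ q :=
  Nat.sInf_le ⟨c, hc⟩

theorem Connected.exists_isRainbowColoring_rxk [Fintype V] [DecidableEq V] (hG : G.Connected)
    (k : ℕ) : ∃ c : Sym2 V → Fin (G.rxk k), G.IsRainbowColoring k c :=
  Nat.sInf_mem (s := {q | ∃ c : Sym2 V → Fin q, G.IsRainbowColoring k c})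
    ⟨_, Fintype.equivFin (Sym2 V),
      isRainbowColoring_of_injective hG (Fintype.equivFin _).injective k⟩

theorem IsRainbowColoring.exists_connected_of_card_le [Fintype V] [DecidableEq V]
    {c : Sym2 V → α} (hG : G.Connected) (hc : G.IsRainbowColoring 3 c) {B : Finset V}
    (hB : B.card ≤ 3) :
    ∃ T : G.Subgraph, T.Connected ∧ ↑B ⊆ T.verts ∧ Set.InjOn c T.edgeSet := by
  by_cases hV : 3 ≤ Fintype.card V
  · obtain ⟨B', hBB', -, hB'⟩ := Finset.exists_subsuperset_card_eq (Finset.subset_univ B) hB hV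
    obtain ⟨T, hT, hB'T, hcT⟩ := hc B' hB'
    exact ⟨T, ⟨hT.connected⟩, (Finset.coe_subset.2 hBB').trans hB'T, hcT⟩
  · refine ⟨⊤, Subgraph.connected_top_iff.2 hG, Set.subset_univ _, ?_⟩
    rw [Subgraph.edgeSet_top]
    exact (edgeSet_subsingleton_of_card_le_two (by omega)).injOn c

end Rainbow

section Pullback

variable {V W : Type*} {G : SimpleGraph V}

def Subgraph.pullback (T : G.Subgraph) (H : SimpleGraph W) (π : W → V) : H.Subgraph where
  verts := π ⁻¹' T.verts
  Adj w₁ w₂ :=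
    H.Adj w₁ w₂ ∧ π w₁ ∈ T.verts ∧ π w₂ ∈ T.verts ∧ (π w₁ = π w₂ ∨ T.Adj (π w₁) (π w₂))
  adj_sub h := h.1
  edge_vert h := h.2.1
  symm := ⟨fun _ _ ⟨h, h₁, h₂, h₃⟩ => ⟨h.symm, h₂, h₁, h₃.imp Eq.symm Subgraph.Adj.symm⟩⟩

theorem Subgraph.map_mem_edgeSet_of_mem_pullback {T : G.Subgraph} {H : SimpleGraph W}
    {π : W → V} {e : Sym2 W} (he : e ∈ (T.pullback H π).edgeSet) (hd : ¬(e.map π).IsDiag) :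
    e.map π ∈ T.edgeSet := by
  induction e using Sym2.ind with
  | _ w₁ w₂ => exact he.2.2.2.resolve_left (by simpa using hd)

def pullbackColoring [DecidableEq V] {q : ℕ} (π : W → V) (c : Sym2 V → Fin q) (e : Sym2 W) :
    Fin (q + 1) :=
  if (e.map π).IsDiag then Fin.last q else (c (e.map π)).castSucc

theorem injOn_pullbackColoring [DecidableEq V] {q : ℕ} {π : W → V} {c : Sym2 V → Fin q}
    {E : Set (Sym2 W)} (hdiag : {e ∈ E | (e.map π).IsDiag}.Subsingleton)
    (hinj : Set.InjOn (Sym2.map π) {e ∈ E | ¬(e.map π).IsDiag})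
    (hc : Set.InjOn c (Sym2.map π '' {e ∈ E | ¬(e.map π).IsDiag})) :
    Set.InjOn (pullbackColoring π c) E := by
  intro e₁ he₁ e₂ he₂ h
  unfold pullbackColoring at h
  by_cases hd₁ : (e₁.map π).IsDiag <;> by_cases hd₂ : (e₂.map π).IsDiag <;>
    simp only [hd₁, hd₂, if_true, if_false] at h
  · exact hdiag ⟨he₁, hd₁⟩ ⟨he₂, hd₂⟩
  · exact absurd h.symm (Fin.castSucc_lt_last _).ne
  · exact absurd h (Fin.castSucc_lt_last _).ne
  · exact hinj ⟨he₁, hd₁⟩ ⟨he₂, hd₂⟩ (hc ⟨e₁, ⟨he₁, hd₁⟩, rfl⟩ ⟨e₂, ⟨he₂, hd₂⟩, rfl⟩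
      (Fin.castSucc_injective _ h))

end Pullback

section Subdivision

variable {V W : Type*}

structure IsEdgeSubdivision (G : SimpleGraph V) (H : SimpleGraph W) (u v : V)
    (f : W ≃ Option V) : Prop where
  adj_some_some : ∀ a b, H.Adj (f.symm (some a)) (f.symm (some b)) ↔ G.Adj a b ∧ s(a, b) ≠ s(u, v)
  adj_none_some : ∀ a, H.Adj (f.symm none) (f.symm (some a)) ↔ a = u ∨ a = v

def contraction (f : W ≃ Option V) (u : V) (w : W) : V := (f w).getD u

@[simp]
theorem contraction_some (f : W ≃ Option V) (u a : V) : contraction f u (f.symm (some a)) = a := by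
  simp [contraction]

@[simp]
theorem contraction_none (f : W ≃ Option V) (u : V) : contraction f u (f.symm none) = u := by
  simp [contraction]

theorem eq_of_isDiag_map_contraction {H : SimpleGraph W} {f : W ≃ Option V} {u : V}
    {e : Sym2 W} (he : e ∈ H.edgeSet) (hd : (e.map (contraction f u)).IsDiag) :
    e = s(f.symm none, f.symm (some u)) := by
  induction e using Sym2.ind with
  | _ w₁ w₂ =>
    obtain ⟨o₁, rfl⟩ := f.symm.surjective w₁
    obtain ⟨o₂, rfl⟩ := f.symm.surjective w₂
    rw [mem_edgeSet] at he
    rcases o₁ with _ | a <;> rcases o₂ with _ | b <;>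
      simp only [Sym2.map_mk, Sym2.mk_isDiag_iff, contraction_some, contraction_none] at hd
    · exact (he.ne rfl).elim
    · rw [← hd]
    · rw [hd, Sym2.eq_swap]
    · rw [hd] at he; exact (he.ne rfl).elim

namespace IsEdgeSubdivision

variable {G : SimpleGraph V} {H : SimpleGraph W} {u v : V} {f : W ≃ Option V}

theorem injOn_map_contraction (hs : IsEdgeSubdivision G H u v f) :
    Set.InjOn (Sym2.map (contraction f u)) {e ∈ H.edgeSet | ¬(e.map (contraction f u)).IsDiag} := by
  classical
  -- `s(u, v)` can only be the image of the edge from the new vertex to `v`.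
  refine Set.LeftInvOn.injOn (f₁' := fun e =>
    if e = s(u, v) then s(f.symm none, f.symm (some v)) else e.map (f.symm ∘ some)) ?_
  rintro e ⟨he, hd⟩
  induction e using Sym2.ind with
  | _ w₁ w₂ =>
    obtain ⟨o₁, rfl⟩ := f.symm.surjective w₁
    obtain ⟨o₂, rfl⟩ := f.symm.surjective w₂
    rw [mem_edgeSet] at he
    rcases o₁ with _ | a <;> rcases o₂ with _ | b <;>
      simp only [Sym2.map_mk, Sym2.mk_isDiag_iff, contraction_some, contraction_none] at hd ⊢
    · exact (he.ne rfl).elim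
    · obtain rfl : b = v := ((hs.adj_none_some b).1 he).resolve_left (Ne.symm hd)
      rw [if_pos rfl]
    · obtain rfl : a = v := ((hs.adj_none_some a).1 he.symm).resolve_left hd
      rw [if_pos Sym2.eq_swap, Sym2.eq_swap]
    · rw [if_neg ((hs.adj_some_some a b).1 he).2]
      rfl

theorem pullback_connected (hs : IsEdgeSubdivision G H u v f) {T : G.Subgraph}
    (hT : T.Connected) : (T.pullback H (contraction f u)).Connected := by
  set A := T.pullback H (contraction f u)
  have hx_adj : ∀ {a}, a = u ∨ a = v → H.Adj (f.symm none) (f.symm (some a)) :=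
    (hs.adj_none_some _).2
  refine ⟨Connected.of_adj_reachable (H := A.coe) hT.coe
    (fun a => ⟨f.symm (some a), by simp [A, Subgraph.pullback, a.2]⟩) ?_ ?_⟩
  · rintro ⟨a, ha⟩ ⟨b, hb⟩ (hab : T.Adj a b)
    by_cases he : s(a, b) = s(u, v)
    · have hx : ∀ {c}, c ∈ T.verts → (c = u ∨ c = v ∧ T.Adj u v) →
          A.Adj (f.symm none) (f.symm (some c)) := by
        rintro c hc (rfl | ⟨rfl, huv⟩)
        · exact ⟨hx_adj (Or.inl rfl), by simpa using hc, by simpa using hc, Or.inl (by simp)⟩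
        · exact ⟨hx_adj (Or.inr rfl), by simpa using huv.fst_mem, by simpa using hc,
            Or.inr (by simpa using huv)⟩
      rcases Sym2.eq_iff.1 he with ⟨rfl, rfl⟩ | ⟨rfl, rfl⟩
      · exact (hx ha (Or.inl rfl)).coe.reachable.symm.trans
          (hx hb (Or.inr ⟨rfl, hab⟩)).coe.reachable
      · exact (hx ha (Or.inr ⟨rfl, hab.symm⟩)).coe.reachable.symm.trans
          (hx hb (Or.inl rfl)).coe.reachable
    · have hA : A.Adj (f.symm (some a)) (f.symm (some b)) :=
        ⟨(hs.adj_some_some a b).2 ⟨T.adj_sub hab, he⟩, by simpa using ha, by simpa using hb,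
          Or.inr (by simpa using hab)⟩
      exact hA.coe.reachable
  · rintro ⟨w, hw⟩
    refine ⟨⟨contraction f u w, hw⟩, ?_⟩
    obtain ⟨_ | a, rfl⟩ := f.symm.surjective w
    · have hu : u ∈ T.verts := by simpa [A, Subgraph.pullback] using hw
      have hA : A.Adj (f.symm none) (f.symm (some u)) :=
        ⟨hx_adj (Or.inl rfl), by simpa using hu, by simpa using hu, Or.inl (by simp)⟩
      simpa using hA.coe.reachable
    · simp

theorem connected (hs : IsEdgeSubdivision G H u v f) (hG : G.Connected) : H.Connected := by
  have hA := hs.pullback_connected (Subgraph.connected_top_iff.2 hG)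
  exact Subgraph.connected_top_iff.1 (hA.mono le_top (Set.preimage_univ))

theorem rxk_three_le [Fintype V] [DecidableEq V] [DecidableEq W]
    (hs : IsEdgeSubdivision G H u v f) (hG : G.Connected) : H.rxk 3 ≤ G.rxk 3 + 1 := by
  obtain ⟨c, hc⟩ := hG.exists_isRainbowColoring_rxk 3
  refine rxk_le_of_isRainbowColoring (pullbackColoring (contraction f u) c) fun S hS => ?_
  obtain ⟨T, hT, hST, hcT⟩ := hc.exists_connected_of_card_le hG
    (B := S.image (contraction f u)) (Finset.card_image_le.trans hS.le)
  refine exists_isRainbowSTree_of_connected (hs.pullback_connected hT)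
    (fun w hw => hST (Finset.mem_coe.2 (Finset.mem_image_of_mem _ hw))) ?_
  refine injOn_pullbackColoring ?_ (hs.injOn_map_contraction.mono ?_) (hcT.mono ?_)
  · rintro e₁ ⟨he₁, hd₁⟩ e₂ ⟨he₂, hd₂⟩
    rw [eq_of_isDiag_map_contraction (Subgraph.edgeSet_subset _ he₁) hd₁,
      eq_of_isDiag_map_contraction (Subgraph.edgeSet_subset _ he₂) hd₂]
  · exact fun e ⟨he, hd⟩ => ⟨Subgraph.edgeSet_subset _ he, hd⟩
  · rintro _ ⟨e, ⟨he, hd⟩, rfl⟩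
    exact Subgraph.map_mem_edgeSet_of_mem_pullback he hd

end IsEdgeSubdivision

end Subdivision

end SimpleGraph

theorem rxk_three_le_of_reflTransGen_subdivisionStep {X Y : GraphSig.{u}}
    (h : Relation.ReflTransGen SubdivisionStep X Y) [Finite X.1] (hX : X.2.Connected) :
    Finite Y.1 ∧ Y.2.Connected ∧ Nat.card X.1 ≤ Nat.card Y.1 ∧
      ∀ [DecidableEq X.1] [DecidableEq Y.1],
        Y.2.rxk 3 ≤ X.2.rxk 3 + (Nat.card Y.1 - Nat.card X.1) := by
  induction h with
  | refl => exact ⟨inferInstance, hX, le_rfl, by simp⟩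
  | @tail Y Z _ hYZ ih =>
    obtain ⟨hY, hYconn, hXY, hrx⟩ := ih
    obtain ⟨u, v, -, f, hf₁, hf₂⟩ := hYZ
    have hs : IsEdgeSubdivision Y.2 Z.2 u v f := ⟨hf₁, hf₂⟩
    have hZ : Finite Z.1 := .of_equiv _ f.symm
    have hcard : Nat.card Z.1 = Nat.card Y.1 + 1 := by
      rw [Nat.card_congr f, Finite.card_option]
    refine ⟨hZ, hs.connected hYconn, by omega, fun {_ _} => ?_⟩
    classical
    have := Fintype.ofFinite Y.1
    have hZY : Z.2.rxk 3 ≤ Y.2.rxk 3 + 1 := hs.rxk_three_le hYconn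
    have hYX : Y.2.rxk 3 ≤ X.2.rxk 3 + (Nat.card Y.1 - Nat.card X.1) := hrx
    omega

theorem stmt_15 {V W : Type u} [Fintype V] [DecidableEq V] [Fintype W] [DecidableEq W]
    (G : SimpleGraph V) (H : SimpleGraph W)
    (hconn : G.Connected) (hsub : IsSubdivision G H) :
    H.rxk 3 ≤ G.rxk 3 + (Fintype.card W - Fintype.card V) := by
  obtain ⟨-, -, -, h⟩ := rxk_three_le_of_reflTransGen_subdivisionStep hsub hconn
  simpa only [Nat.card_eq_fintype_card] using h
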